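/- arXiv:1902.08006 — 2 statements merged into one kernel-verified Lean document; each statement's English description precedes it below -/
import Mathlib

section
/- The family {[5:ω, 2:1], [5:ω]} (the first having infinitely many classes of size 5 plus one class of size 2, the second having infinitely many classes of size 5 only) is not InfEx-learnable up to isomorphism, but it is InfEx-learnable up to bi-embeddability (indeed by a constant learner, since the two structures are bi-embeddable). -/
open Set

/-- An equivalence structure on ℕ. -/
structure EqStruct where
  rel : ℕ → ℕ → Prop
  equiv : Equivalence rel

namespace EqStruct

/-- Isomorphism of equivalence structures. -/
def Isom (A B : EqStruct) : Prop :=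
  ∃ f : ℕ → ℕ, Function.Bijective f ∧ ∀ x y, A.rel x y ↔ B.rel (f x) (f y)

/-- Embedding of equivalence structures. -/
def Embeds (A B : EqStruct) : Prop :=
  ∃ f : ℕ → ℕ, Function.Injective f ∧ ∀ x y, A.rel x y ↔ B.rel (f x) (f y)

/-- Bi-embeddability. -/
def Biembed (A B : EqStruct) : Prop := A.Embeds B ∧ B.Embeds A

/-- The equivalence class of `x`. -/
def classOf (A : EqStruct) (x : ℕ) : Set ℕ := {y | A.rel x y}

/-- The number of equivalence classes of size `k` (counted in `ℕ∞`). -/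
noncomputable def numClasses (A : EqStruct) (k : ℕ∞) : ℕ∞ :=
  {C : Set ℕ | (∃ x, C = A.classOf x) ∧ C.encard = k}.encard

/-- `A` finitely embeds into `B`: every finite substructure `A[s]` embeds into `B`. -/
def FinEmbeds (A B : EqStruct) : Prop :=
  ∀ s : ℕ, ∃ f : ℕ → ℕ, Set.InjOn f (Set.Iio s) ∧
    ∀ x < s, ∀ y < s, (A.rel x y ↔ B.rel (f x) (f y))

end EqStruct

/-- An informant for a structure: lists every pair, labelled correctly. -/
def IsInformant (A : EqStruct) (I : ℕ → (ℕ × ℕ) × Bool) : Prop :=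
  (∀ p : ℕ × ℕ, ∃ n, (I n).1 = p) ∧
  (∀ n, ((I n).2 = true ↔ A.rel (I n).1.1 (I n).1.2))

/-- A learner from informants: `none` is the `?` symbol. -/
abbrev Learner := List ((ℕ × ℕ) × Bool) → Option ℕ

/-- The initial segment `I[n]`. -/
def seg (I : ℕ → (ℕ × ℕ) × Bool) (n : ℕ) : List ((ℕ × ℕ) × Bool) :=
  (List.range n).map I

/-- `M` InfEx-learns `A` up to `sim`, with hypotheses indices into `Me`. -/
def InfExLearns (Me : ℕ → EqStruct) (sim : EqStruct → EqStruct → Prop)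
    (M : Learner) (A : EqStruct) : Prop :=
  ∀ B, B.Isom A → ∀ I, IsInformant B I →
    ∃ e, sim (Me e) B ∧ ∃ N, ∀ n ≥ N, M (seg I n) = some e

/-- `M` finitely learns `A` from informants up to `sim`. -/
def InfFinLearns (Me : ℕ → EqStruct) (sim : EqStruct → EqStruct → Prop)
    (M : Learner) (A : EqStruct) : Prop :=
  ∀ B, B.Isom A → ∀ I, IsInformant B I →
    ∃ e, sim (Me e) B ∧ (∃ n, M (seg I n) = some e) ∧
      ∀ n e', M (seg I n) = some e' → e' = e

/-- A text for a structure: enumerates exactly the related pairs (`none` is pause). -/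
def IsText (A : EqStruct) (T : ℕ → Option (ℕ × ℕ)) : Prop :=
  ∀ x y, A.rel x y ↔ ∃ n, T n = some (x, y)

/-- A learner from texts. -/
abbrev TxtLearner := List (Option (ℕ × ℕ)) → Option ℕ

/-- The initial segment `T[n]` of a text. -/
def tseg (T : ℕ → Option (ℕ × ℕ)) (n : ℕ) : List (Option (ℕ × ℕ)) :=
  (List.range n).map T

/-- `M` TxtEx-learns `A` up to `sim`. -/
def TxtExLearns (Me : ℕ → EqStruct) (sim : EqStruct → EqStruct → Prop)
    (M : TxtLearner) (A : EqStruct) : Prop :=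
  ∀ B, B.Isom A → ∀ T, IsText B T →
    ∃ e, sim (Me e) B ∧ ∃ N, ∀ n ≥ N, M (tseg T n) = some e

/-- `σ` describes a finite part of `A`: it is an initial segment of an informant for `A`. -/
def DescribesPart (A : EqStruct) (σ : List ((ℕ × ℕ) × Bool)) : Prop :=
  ∃ I, IsInformant A I ∧ σ = seg I σ.length


/-!
The two structures are bi-embeddable: `[5:ω]` sits inside `[5:ω, 2:1]` away from the pair class,
and `[5:ω, 2:1]` sits inside `[5:ω]` with the pair inside a class of five. A countable equivalence
structure with finite classes is determined up to isomorphism by its class sizes, so a constant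
learner naming a copy of `[5:ω]` learns both structures up to bi-embeddability.

Up to isomorphism we diagonalize against a learner `M`. A finite part of a copy of `[5:ω]`,
continued by a pair class and then blocks of five, is a copy of `[5:ω, 2:1]`, on which `M`
eventually names `[5:ω, 2:1]`, say at stage `n`. Completing the pair to a class of five with
elements beyond `n`, which `M` has not seen, gives a longer finite part of a copy of `[5:ω]`.
In the limit we obtain a copy of `[5:ω]` on which `M` names `[5:ω, 2:1]` at arbitrarily late
stages, so `M` does not converge to an index of `[5:ω]` on it.
-/

theorem nonempty_equiv_of_enatCard_eq {α β : Type*} [Countable α] [Countable β]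
    (h : ENat.card α = ENat.card β) : Nonempty (α ≃ β) := by
  rw [← Cardinal.lift_mk_eq']
  refine Cardinal.toENat_injOn (by simp [Cardinal.mk_le_aleph0]) (by simp [Cardinal.mk_le_aleph0])
    ?_
  rw [Cardinal.toENat_lift, Cardinal.toENat_lift]
  exact h

theorem exists_equiv_apply_eq {α β : Type*} [Countable α] [Countable β]
    (h : ENat.card α = ENat.card β) (a : α) (b : β) : ∃ e : α ≃ β, e a = b := by
  classical
  obtain ⟨e⟩ := nonempty_equiv_of_enatCard_eq h
  exact ⟨e.trans (Equiv.swap (e a) b), Equiv.swap_apply_left _ _⟩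

theorem exists_equiv_comp_eq {α β γ : Type*} [Countable α] [Countable β] (f : α → γ) (g : β → γ)
    (h : ∀ c, (f ⁻¹' {c}).encard = (g ⁻¹' {c}).encard) : ∃ e : α ≃ β, ∀ a, g (e a) = f a := by
  have fibers (c : γ) : Nonempty ({a // f a = c} ≃ {b // g b = c}) :=
    nonempty_equiv_of_enatCard_eq (h c)
  refine ⟨(Equiv.sigmaFiberEquiv f).symm.trans
    ((Equiv.sigmaCongrRight fun c => (fibers c).some).trans (Equiv.sigmaFiberEquiv g)), fun a => ?_⟩
  exact ((fibers (f a)).some ⟨a, rfl⟩).2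

theorem Set.encard_Ico_add (a n : ℕ) : (Set.Ico a (a + n)).encard = n := by
  rw [← (Set.finite_Ico a (a + n)).cast_ncard_eq, Set.ncard_Ico_nat, Nat.add_sub_cancel_left]

namespace EqStruct

section Isomorphism

variable {A B C : EqStruct}

theorem Isom.symm (h : A.Isom B) : B.Isom A := by
  obtain ⟨f, hf, hrel⟩ := h
  let e := Equiv.ofBijective f hf
  refine ⟨e.symm, e.symm.bijective, fun x y => ?_⟩
  rw [hrel, show f (e.symm x) = x from e.apply_symm_apply x,
    show f (e.symm y) = y from e.apply_symm_apply y]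

theorem Isom.trans (h₁ : A.Isom B) (h₂ : B.Isom C) : A.Isom C := by
  obtain ⟨f, hf, hrf⟩ := h₁
  obtain ⟨g, hg, hrg⟩ := h₂
  exact ⟨g ∘ f, hg.comp hf, fun x y => (hrf x y).trans (hrg (f x) (f y))⟩

theorem Embeds.trans (h₁ : A.Embeds B) (h₂ : B.Embeds C) : A.Embeds C := by
  obtain ⟨f, hf, hrf⟩ := h₁
  obtain ⟨g, hg, hrg⟩ := h₂
  exact ⟨g ∘ f, hg.comp hf, fun x y => (hrf x y).trans (hrg (f x) (f y))⟩

theorem Isom.embeds (h : A.Isom B) : A.Embeds B := by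
  obtain ⟨f, hf, hrel⟩ := h
  exact ⟨f, hf.injective, hrel⟩

theorem Isom.biembed (h : A.Isom B) : A.Biembed B := ⟨h.embeds, h.symm.embeds⟩

theorem Biembed.trans (h₁ : A.Biembed B) (h₂ : B.Biembed C) : A.Biembed C :=
  ⟨h₁.1.trans h₂.1, h₂.2.trans h₁.2⟩

theorem Isom.exists_encard_classOf_eq (h : A.Isom B) (x : ℕ) :
    ∃ y, (B.classOf y).encard = (A.classOf x).encard := by
  obtain ⟨f, hf, hrel⟩ := h
  refine ⟨f x, ?_⟩
  have : B.classOf (f x) = f '' A.classOf x := by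
    ext y
    obtain ⟨z, rfl⟩ := hf.surjective y
    simp [classOf, hrel, hf.injective.eq_iff]
  rw [this, hf.injective.injOn.encard_image]

end Isomorphism

section Classification

def setoid (A : EqStruct) : Setoid ℕ := ⟨A.rel, A.equiv⟩

theorem mk_eq_mk_iff (A : EqStruct) {x y : ℕ} :
    Quotient.mk A.setoid x = Quotient.mk A.setoid y ↔ A.rel x y :=
  Quotient.eq

theorem classOf_eq_of_rel (A : EqStruct) {x y : ℕ} (h : A.rel x y) :
    A.classOf x = A.classOf y := by
  ext z
  exact ⟨A.equiv.trans (A.equiv.symm h), A.equiv.trans h⟩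

theorem preimage_mk_singleton (A : EqStruct) (x : ℕ) :
    Quotient.mk A.setoid ⁻¹' {Quotient.mk A.setoid x} = A.classOf x := by
  ext y
  exact A.mk_eq_mk_iff.trans ⟨A.equiv.symm, A.equiv.symm⟩

theorem infinite_quotient (A : EqStruct) (h : ∀ x, (A.classOf x).Finite) :
    Infinite (Quotient A.setoid) := by
  by_contra hfin
  rw [not_infinite_iff_finite] at hfin
  have : (⋃ q : Quotient A.setoid, Quotient.mk A.setoid ⁻¹' {q}).Finite :=
    Set.finite_iUnion (Quotient.ind fun x => (A.preimage_mk_singleton x).symm ▸ h x)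
  rw [← Set.preimage_iUnion, Set.iUnion_of_singleton, Set.preimage_univ] at this
  exact Set.infinite_univ this

theorem isom_of_equiv_quotient {A B : EqStruct} (e : Quotient A.setoid ≃ Quotient B.setoid)
    (h : ∀ x y, e (Quotient.mk _ x) = Quotient.mk _ y →
      (A.classOf x).encard = (B.classOf y).encard) :
    A.Isom B := by
  have fibers (q : Quotient A.setoid) :
      (Quotient.mk A.setoid ⁻¹' {q}).encard = (e.symm ∘ Quotient.mk B.setoid ⁻¹' {q}).encard := by
    induction q using Quotient.ind with | _ x
    obtain ⟨y, hy⟩ := Quotient.exists_rep (e (Quotient.mk _ x))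
    have : e.symm ∘ Quotient.mk B.setoid ⁻¹' {Quotient.mk _ x} = B.classOf y := by
      rw [Set.preimage_comp, ← Equiv.image_eq_preimage_symm, Set.image_singleton, ← hy,
        preimage_mk_singleton]
    rw [this, preimage_mk_singleton]
    exact h x y hy.symm
  obtain ⟨σ, hσ⟩ := exists_equiv_comp_eq _ _ fibers
  refine ⟨σ, σ.bijective, fun x y => ?_⟩
  have hσ' (x : ℕ) : Quotient.mk B.setoid (σ x) = e (Quotient.mk A.setoid x) := by
    rw [← hσ x]
    simp
  rw [← mk_eq_mk_iff, ← mk_eq_mk_iff, hσ', hσ', e.apply_eq_iff_eq]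

theorem finite_classOf_of_exceptional {A : EqStruct} {a j k : ℕ}
    (hAa : (A.classOf a).encard = j) (hA : ∀ x, ¬ A.rel x a → (A.classOf x).encard = k)
    (x : ℕ) : (A.classOf x).Finite := by
  by_cases hxa : A.rel x a
  · exact A.classOf_eq_of_rel hxa ▸ Set.finite_of_encard_eq_coe hAa
  · exact Set.finite_of_encard_eq_coe (hA x hxa)

theorem isom_of_exceptional_class {A B : EqStruct} {a b j k : ℕ}
    (hAa : (A.classOf a).encard = j) (hA : ∀ x, ¬ A.rel x a → (A.classOf x).encard = k)
    (hBb : (B.classOf b).encard = j) (hB : ∀ x, ¬ B.rel x b → (B.classOf x).encard = k) :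
    A.Isom B := by
  have := A.infinite_quotient (finite_classOf_of_exceptional hAa hA)
  have := B.infinite_quotient (finite_classOf_of_exceptional hBb hB)
  obtain ⟨e, he⟩ := exists_equiv_apply_eq (by simp only [ENat.card_eq_top_of_infinite])
    (Quotient.mk A.setoid a) (Quotient.mk B.setoid b)
  refine isom_of_equiv_quotient e fun x y hxy => ?_
  have hxa_iff : A.rel x a ↔ B.rel y b := by
    rw [← mk_eq_mk_iff, ← mk_eq_mk_iff, ← hxy, ← he, e.apply_eq_iff_eq]
  by_cases hxa : A.rel x a
  · rw [A.classOf_eq_of_rel hxa, B.classOf_eq_of_rel (hxa_iff.mp hxa), hAa, hBb]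
  · rw [hA x hxa, hB y (hxa_iff.not.mp hxa)]

end Classification

section Models

def ofFn {α : Type*} (c : ℕ → α) : EqStruct :=
  ⟨fun x y => c x = c y, ⟨fun _ => rfl, Eq.symm, Eq.trans⟩⟩

def fives : EqStruct := ofFn (· / 5)

-- classes `{0, 1}`, `{2, …, 6}`, `{7, …, 11}`, …
def twoFives : EqStruct := ofFn fun x => (x + 3) / 5

theorem encard_classOf_fives (x : ℕ) : (fives.classOf x).encard = 5 := by
  have : fives.classOf x = Set.Ico (5 * (x / 5)) (5 * (x / 5) + 5) := by
    ext y
    simp only [fives, ofFn, classOf, Set.mem_ofPred_eq, Set.mem_Ico]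
    omega
  rw [this, Set.encard_Ico_add]
  rfl

theorem encard_classOf_twoFives_zero : (twoFives.classOf 0).encard = 2 := by
  have : twoFives.classOf 0 = Set.Ico 0 (0 + 2) := by
    ext y
    simp only [twoFives, ofFn, classOf, Set.mem_ofPred_eq, Set.mem_Ico]
    omega
  rw [this, Set.encard_Ico_add]
  rfl

theorem encard_classOf_twoFives {x : ℕ} (hx : ¬ twoFives.rel x 0) :
    (twoFives.classOf x).encard = 5 := by
  have : twoFives.classOf x = Set.Ico (5 * ((x + 3) / 5) - 3) (5 * ((x + 3) / 5) - 3 + 5) := by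
    simp only [twoFives, ofFn] at hx
    ext y
    simp only [twoFives, ofFn, classOf, Set.mem_ofPred_eq, Set.mem_Ico]
    omega
  rw [this, Set.encard_Ico_add]
  rfl

theorem fives_biembed_twoFives : fives.Biembed twoFives := by
  refine ⟨⟨(· + 2), add_left_injective 2, fun x y => ?_⟩,
    ⟨(· + 3), add_left_injective 3, fun _ _ => Iff.rfl⟩⟩
  simp only [fives, twoFives, ofFn]
  omega

theorem isom_fives {A : EqStruct} (hA : ∀ x, (A.classOf x).encard = 5) : A.Isom fives :=
  isom_of_exceptional_class (a := 0) (b := 0) (hA 0) (fun x _ => hA x)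
    (encard_classOf_fives 0) (fun x _ => encard_classOf_fives x)

theorem isom_twoFives {B : EqStruct} {b : ℕ} (hBb : (B.classOf b).encard = 2)
    (hB : ∀ x, ¬ B.rel x b → (B.classOf x).encard = 5) : B.Isom twoFives :=
  isom_of_exceptional_class hBb hB encard_classOf_twoFives_zero fun _ => encard_classOf_twoFives

theorem not_isom_twoFives_fives : ¬ twoFives.Isom fives := fun h => by
  obtain ⟨y, hy⟩ := h.exists_encard_classOf_eq 0
  rw [encard_classOf_fives, encard_classOf_twoFives_zero] at hy
  exact absurd hy (by decide)

end Models

section Splicing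

def splice (R : EqStruct) (K : ℕ) (S : EqStruct) : EqStruct where
  rel x y := x < K ∧ y < K ∧ R.rel x y ∨ K ≤ x ∧ K ≤ y ∧ S.rel (x - K) (y - K)
  equiv := by
    refine ⟨fun x => ?_, ?_, ?_⟩
    · rcases lt_or_ge x K with h | h
      · exact .inl ⟨h, h, R.equiv.refl x⟩
      · exact .inr ⟨h, h, S.equiv.refl _⟩
    · rintro x y (⟨hx, hy, h⟩ | ⟨hx, hy, h⟩)
      · exact .inl ⟨hy, hx, R.equiv.symm h⟩
      · exact .inr ⟨hy, hx, S.equiv.symm h⟩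
    · rintro x y z (⟨hx, hy, h⟩ | ⟨hx, hy, h⟩) (⟨hy', hz, h'⟩ | ⟨hy', hz, h'⟩)
      · exact .inl ⟨hx, hz, R.equiv.trans h h'⟩
      · omega
      · omega
      · exact .inr ⟨hx, hz, S.equiv.trans h h'⟩

def AgreeBelow (R S : EqStruct) (K : ℕ) : Prop :=
  ∀ x < K, ∀ y < K, R.rel x y ↔ S.rel x y

def ClassSizeBelow (R : EqStruct) (K k : ℕ) : Prop :=
  ∀ x < K, {y | y < K ∧ R.rel x y}.encard = k

variable {R S S' : EqStruct} {K L k x : ℕ}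

theorem splice_rel_of_lt {y : ℕ} (hx : x < K) :
    (R.splice K S).rel x y ↔ y < K ∧ R.rel x y := by
  simp [splice, hx, not_le.mpr hx]

theorem splice_rel_of_le {y : ℕ} (hx : K ≤ x) :
    (R.splice K S).rel x y ↔ K ≤ y ∧ S.rel (x - K) (y - K) := by
  simp [splice, hx, not_lt.mpr hx]

theorem AgreeBelow.symm (h : R.AgreeBelow S K) : S.AgreeBelow R K :=
  fun x hx y hy => (h x hx y hy).symm

theorem AgreeBelow.trans (h₁ : R.AgreeBelow S K) (h₂ : S.AgreeBelow S' K) : R.AgreeBelow S' K :=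
  fun x hx y hy => (h₁ x hx y hy).trans (h₂ x hx y hy)

theorem AgreeBelow.mono (h : R.AgreeBelow S K) (hLK : L ≤ K) : R.AgreeBelow S L :=
  fun x hx y hy => h x (hx.trans_le hLK) y (hy.trans_le hLK)

theorem AgreeBelow.classSizeBelow (h : R.AgreeBelow S K) (hR : R.ClassSizeBelow K k) :
    S.ClassSizeBelow K k := by
  intro x hx
  rw [← hR x hx]
  congr 1
  ext y
  exact and_congr_right fun hy => (h x hx y hy).symm

theorem agreeBelow_splice_left : (R.splice K S).AgreeBelow R K :=
  fun _ hx _ hy => (splice_rel_of_lt hx).trans (and_iff_right hy)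

theorem AgreeBelow.splice_right (h : S.AgreeBelow S' L) :
    (R.splice K S).AgreeBelow (R.splice K S') (K + L) := by
  intro x hx y hy
  rcases lt_or_ge x K with hxK | hxK
  · rw [splice_rel_of_lt hxK, splice_rel_of_lt hxK]
  · rw [splice_rel_of_le hxK, splice_rel_of_le hxK]
    exact and_congr_right fun hKy => h _ (by omega) _ (by omega)

theorem classOf_splice_of_lt (hx : x < K) :
    (R.splice K S).classOf x = {y | y < K ∧ R.rel x y} := by
  ext y
  exact splice_rel_of_lt hx

theorem classOf_splice_of_le (hx : K ≤ x) :
    (R.splice K S).classOf x = (· + K) '' S.classOf (x - K) := by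
  ext y
  simp only [classOf, Set.mem_ofPred_eq, Set.mem_image, splice_rel_of_le hx]
  constructor
  · rintro ⟨hKy, hxy⟩
    exact ⟨y - K, hxy, by omega⟩
  · rintro ⟨t, hxt, rfl⟩
    simpa using hxt

theorem ClassSizeBelow.splice (hR : R.ClassSizeBelow K k) (hS : S.ClassSizeBelow L k) :
    (R.splice K S).ClassSizeBelow (K + L) k := by
  intro x hx
  rcases lt_or_ge x K with hxK | hxK
  · rw [← hR x hxK]
    congr 1
    ext y
    simp only [Set.mem_ofPred_eq, splice_rel_of_lt hxK]
    constructor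
    · rintro ⟨-, hy, hxy⟩
      exact ⟨hy, hxy⟩
    · rintro ⟨hy, hxy⟩
      exact ⟨by omega, hy, hxy⟩
  · have : {y | y < K + L ∧ (R.splice K S).rel x y} =
        (· + K) '' {t | t < L ∧ S.rel (x - K) t} := by
      ext y
      simp only [Set.mem_ofPred_eq, Set.mem_image, splice_rel_of_le hxK]
      constructor
      · rintro ⟨hy, hKy, hxy⟩
        exact ⟨y - K, ⟨by omega, hxy⟩, by omega⟩
      · rintro ⟨t, ⟨ht, hxt⟩, rfl⟩
        exact ⟨by omega, by omega, by simpa using hxt⟩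
    rw [this, (add_left_injective K).injOn.encard_image]
    exact hS (x - K) (by omega)

theorem isom_splice_twoFives (hR : R.ClassSizeBelow K 5) : (R.splice K twoFives).Isom twoFives := by
  refine isom_twoFives (b := K) ?_ fun x hxK => ?_
  · rw [classOf_splice_of_le le_rfl, (add_left_injective K).injOn.encard_image, Nat.sub_self,
      encard_classOf_twoFives_zero]
  rcases lt_or_ge x K with hx | hx
  · rw [classOf_splice_of_lt hx, hR x hx]
    rfl
  · rw [splice_rel_of_le hx, Nat.sub_self] at hxK
    rw [classOf_splice_of_le hx, (add_left_injective K).injOn.encard_image,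
      encard_classOf_twoFives fun h => hxK ⟨le_rfl, h⟩]

-- on `[0, 5m + 5)`: the pair `{0, 1}` completed by `{5m + 2, 5m + 3, 5m + 4}`, with `m` blocks of
-- five in between, so that below `5m + 2` it is indistinguishable from `twoFives`
def gadget (m : ℕ) : EqStruct := ofFn fun t => if t < 2 ∨ 5 * m + 2 ≤ t then 0 else (t + 3) / 5

theorem classSizeBelow_gadget (m : ℕ) : (gadget m).ClassSizeBelow (5 * m + 5) 5 := by
  intro x hx
  by_cases hx' : x < 2 ∨ 5 * m + 2 ≤ x
  · have : {y | y < 5 * m + 5 ∧ (gadget m).rel x y} =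
        Set.Ico 0 (0 + 2) ∪ Set.Ico (5 * m + 2) (5 * m + 2 + 3) := by
      ext y
      simp only [gadget, ofFn, Set.mem_ofPred_eq, Set.mem_union, Set.mem_Ico, if_pos hx']
      split_ifs <;> omega
    rw [this, Set.encard_union_eq (Set.Ico_disjoint_Ico.mpr (by omega)), Set.encard_Ico_add,
      Set.encard_Ico_add]
    rfl
  · have : {y | y < 5 * m + 5 ∧ (gadget m).rel x y} =
        Set.Ico (5 * ((x + 3) / 5) - 3) (5 * ((x + 3) / 5) - 3 + 5) := by
      ext y
      simp only [gadget, ofFn, Set.mem_ofPred_eq, Set.mem_Ico, if_neg hx']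
      split_ifs <;> omega
    rw [this, Set.encard_Ico_add]

theorem agreeBelow_gadget_twoFives (m : ℕ) : (gadget m).AgreeBelow twoFives (5 * m + 2) := by
  intro x hx y hy
  simp only [gadget, twoFives, ofFn]
  split_ifs <;> omega

end Splicing

section Limits

theorem exists_forall_agreeBelow {F : ℕ → EqStruct} {K : ℕ → ℕ} (hK : StrictMono K)
    (hF : ∀ j, (F (j + 1)).AgreeBelow (F j) (K j)) :
    ∃ C : EqStruct, ∀ j, C.AgreeBelow (F j) (K j) := by
  have chain (i j : ℕ) (hij : i ≤ j) : (F j).AgreeBelow (F i) (K i) := by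
    induction j, hij using Nat.le_induction with
    | base => exact fun x _ y _ => Iff.rfl
    | succ j hij ih => exact ((hF j).mono (hK.monotone hij)).trans ih
  have lt_K {n J : ℕ} (h : n < J) : n < K J := h.trans_le (hK.id_le J)
  have key (J x y : ℕ) (hJ : max x y < K J) : (F (max x y + 1)).rel x y ↔ (F J).rel x y := by
    have hx : x < K J := (le_max_left x y).trans_lt hJ
    have hy : y < K J := (le_max_right x y).trans_lt hJ
    rcases le_total J (max x y + 1) with h | h
    · exact chain J _ h x hx y hy
    · exact (chain _ J h x (lt_K (by omega)) y (lt_K (by omega))).symm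
  refine ⟨⟨fun x y => (F (max x y + 1)).rel x y, ⟨fun x => (F _).equiv.refl x, ?_, ?_⟩⟩, ?_⟩
  · intro x y hxy
    rw [max_comm]
    exact (F _).equiv.symm hxy
  · intro x y z hxy hyz
    have hJ := key (max x (max y z) + 1)
    rw [hJ x y (lt_K (by omega))] at hxy
    rw [hJ y z (lt_K (by omega))] at hyz
    rw [hJ x z (lt_K (by omega))]
    exact (F _).equiv.trans hxy hyz
  · intro j x hx y hy
    exact key j x y (max_lt hx hy)

theorem encard_classOf_of_classSizeBelow {C : EqStruct} {k : ℕ}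
    (h : ∀ N, ∃ K, N < K ∧ C.ClassSizeBelow K k) (x : ℕ) : (C.classOf x).encard = k := by
  obtain ⟨K₁, hx, h₁⟩ := h x
  suffices C.classOf x = {y | y < K₁ ∧ C.rel x y} by rw [this, h₁ x hx]
  refine Set.Subset.antisymm (fun y hxy => ?_) fun y hy => hy.2
  obtain ⟨K₂, hK₂, h₂⟩ := h (max y K₁)
  -- the part of the class below `K₁` is already as large as the part below `K₂`
  have : {y | y < K₁ ∧ C.rel x y} = {y | y < K₂ ∧ C.rel x y} :=
    (Set.finite_of_encard_eq_coe (h₁ x hx)).eq_of_subset_of_encard_le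
      (fun z ⟨hz, hxz⟩ => ⟨by omega, hxz⟩) (by rw [h₁ x hx, h₂ x (by omega)])
  rw [this]
  exact ⟨by omega, hxy⟩

end Limits

end EqStruct

open EqStruct

section Learning

open Classical in
noncomputable def canonicalInformant (C : EqStruct) (i : ℕ) : (ℕ × ℕ) × Bool :=
  (Nat.unpair i, decide (C.rel (Nat.unpair i).1 (Nat.unpair i).2))

theorem isInformant_canonicalInformant (C : EqStruct) : IsInformant C (canonicalInformant C) :=
  ⟨fun p => ⟨Nat.pair p.1 p.2, Nat.unpair_pair p.1 p.2⟩, fun _ => by simp [canonicalInformant]⟩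

theorem seg_canonicalInformant_eq {C D : EqStruct} {n : ℕ} (h : C.AgreeBelow D n) :
    seg (canonicalInformant C) n = seg (canonicalInformant D) n := by
  refine List.map_congr_left fun i hi => ?_
  have hin : i < n := List.mem_range.mp hi
  simp only [canonicalInformant, Prod.mk.injEq, true_and, decide_eq_decide]
  exact h _ ((Nat.unpair_left_le i).trans_lt hin) _ ((Nat.unpair_right_le i).trans_lt hin)

variable {Me : ℕ → EqStruct} {M : Learner}

theorem InfExLearns.of_isom {sim : EqStruct → EqStruct → Prop} {A A' : EqStruct}
    (hM : InfExLearns Me sim M A) (h : A'.Isom A) : InfExLearns Me sim M A' :=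
  fun B hB => hM B (hB.trans h)

theorem infExLearns_const {sim : EqStruct → EqStruct → Prop} {A : EqStruct} {e : ℕ}
    (h : ∀ B, B.Isom A → sim (Me e) B) : InfExLearns Me sim (fun _ => some e) A :=
  fun B hB _ _ => ⟨e, h B hB, 0, fun _ _ => rfl⟩

structure FivesPrefix where
  R : EqStruct
  K : ℕ
  classSizeBelow : R.ClassSizeBelow K 5

theorem exists_extension_forcing_twoFives (hMB : InfExLearns Me Isom M twoFives)
    (P : FivesPrefix) (j : ℕ) :
    ∃ P' : FivesPrefix, P.K < P'.K ∧ P'.R.AgreeBelow P.R P.K ∧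
      ∃ e n, j ≤ n ∧ (Me e).Isom twoFives ∧
        ∀ C : EqStruct, C.AgreeBelow P'.R P'.K → M (seg (canonicalInformant C) n) = some e := by
  obtain ⟨R, K, hR⟩ := P
  obtain ⟨e, he, N, hN⟩ := hMB (R.splice K twoFives) (isom_splice_twoFives hR) _
    (isInformant_canonicalInformant _)
  set n := max N j
  refine ⟨⟨R.splice K (gadget n), K + (5 * n + 5), hR.splice (classSizeBelow_gadget n)⟩,
    by dsimp only; omega, agreeBelow_splice_left, e, n, le_max_right N j,
    he.trans (isom_splice_twoFives hR), fun C hC => ?_⟩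
  have : C.AgreeBelow (R.splice K twoFives) n :=
    ((hC.mono (by dsimp only; omega)).trans (agreeBelow_gadget_twoFives n).splice_right).mono
      (by omega)
  rw [seg_canonicalInformant_eq this]
  exact hN n (le_max_left N j)

theorem not_infExLearns_isom_fives_and_twoFives :
    ¬ (InfExLearns Me Isom M fives ∧ InfExLearns Me Isom M twoFives) := by
  rintro ⟨hMA, hMB⟩
  choose next hK hagree e n hn he hM using exists_extension_forcing_twoFives hMB
  let P : ℕ → FivesPrefix := fun j =>
    Nat.rec ⟨fives, 0, fun _ h => absurd h (Nat.not_lt_zero _)⟩ (fun j Pj => next Pj j) j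
  have hPK : StrictMono fun j => (P j).K := strictMono_nat_of_lt_succ fun j => hK (P j) j
  obtain ⟨C, hC⟩ := exists_forall_agreeBelow (F := fun j => (P j).R) hPK fun j => hagree (P j) j
  have hCiso : C.Isom fives := isom_fives <| encard_classOf_of_classSizeBelow fun N =>
    ⟨(P (N + 1)).K, (Nat.lt_succ_self N).trans_le (hPK.id_le _),
      (hC (N + 1)).symm.classSizeBelow (P (N + 1)).classSizeBelow⟩
  obtain ⟨es, hes, Ns, hNs⟩ := hMA C hCiso _ (isInformant_canonicalInformant C)
  have hes' := hM (P Ns) Ns C (hC (Ns + 1))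
  rw [hNs _ (hn _ _), Option.some_inj] at hes'
  exact not_isom_twoFives_fives ((he _ _).symm.trans (hes' ▸ hes.trans hCiso))

end Learning

/-- `{[5:ω,2:1], [5:ω]}` is not InfEx-learnable up to isomorphism, but it is
InfEx-learnable up to bi-embeddability, indeed by a constant learner. -/
theorem stmt2 (Me : ℕ → EqStruct) (A B : EqStruct)
    (hA : ∀ x, (A.classOf x).encard = 5)
    (hB : ∃ a, (B.classOf a).encard = 2 ∧ ∀ x, ¬ B.rel x a → (B.classOf x).encard = 5)
    (he : ∃ e, (Me e).Isom A) :
    (¬ ∃ M : Learner, InfExLearns Me EqStruct.Isom M A ∧ InfExLearns Me EqStruct.Isom M B) ∧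
    (∃ M : Learner, (∀ σ τ, M σ = M τ) ∧
      InfExLearns Me EqStruct.Biembed M A ∧ InfExLearns Me EqStruct.Biembed M B) := by
  obtain ⟨a, ha, hB⟩ := hB
  obtain ⟨e, he⟩ := he
  have hAiso : A.Isom fives := isom_fives hA
  have hBiso : B.Isom twoFives := isom_twoFives ha hB
  refine ⟨fun ⟨M, hMA, hMB⟩ => not_infExLearns_isom_fives_and_twoFives
      ⟨hMA.of_isom hAiso.symm, hMB.of_isom hBiso.symm⟩,
    fun _ => some e, fun _ _ => rfl,
    infExLearns_const fun A' hA' => (he.trans hA'.symm).biembed,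
    infExLearns_const fun B' hB' => ?_⟩
  exact (he.trans hAiso).biembed.trans
    (fives_biembed_twoFives.trans (hBiso.symm.trans hB'.symm).biembed)
end

section
/- (Locking normal form) Let ∼ be any equivalence relation on equivalence structures and let M be any InfEx_∼-learner. Then there exists an informant-locking learner M′ that InfEx_∼-learns every structure that M learns; that is, for every structure A learned by M and every informant I for A, there is n such that I[n] is a weak locking sequence for M′ on A. -/
open Set

/-!
A learner that converges on every informant for `B` has a weak locking sequence: otherwise one
could alternate mind-change extensions with the next correctly labelled pair and obtain an
informant on which it changes its mind infinitely often (Blum–Blum). Every locking sequence can be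
continued to an informant, so its output is the limit of `M` along that informant and hence
correct. The new learner `M'` looks only at the set of entries it has seen and runs `M` on the
locking sequence for that set which has least code. Once an informant has shown the least locking
sequence `π` for `B`, together with a mind-change extension of each of the finitely many sequences
of smaller code, `π` is the least locking sequence for every finite part of `B` extending what was
seen, so `M'` is locked at the correct hypothesis `M π`.
-/

open Function Encodable

section Locking

variable {α β : Type*}

def IsLockingSeq (M : List α → β) (S : Set α) (π : List α) : Prop :=
  (∀ x ∈ π, x ∈ S) ∧ ∀ τ, π <+: τ → (∀ x ∈ τ, x ∈ S) → M τ = M π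

open Classical in
noncomputable def mindChange (M : List α → β) (S : Set α) (π : List α) : List α :=
  if h : ∃ τ, π <+: τ ∧ (∀ x ∈ τ, x ∈ S) ∧ M τ ≠ M π then h.choose else []

variable {M : List α → β} {S : Set α} {π : List α}

lemma mem_of_mem_mindChange {x : α} (hx : x ∈ mindChange M S π) : x ∈ S := by
  unfold mindChange at hx
  split_ifs at hx with h
  · exact h.choose_spec.2.1 x hx
  · simp at hx

lemma mindChange_spec (hπ : ∀ x ∈ π, x ∈ S) (hlock : ¬IsLockingSeq M S π) :
    π <+: mindChange M S π ∧ M (mindChange M S π) ≠ M π := by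
  have h : ∃ τ, π <+: τ ∧ (∀ x ∈ τ, x ∈ S) ∧ M τ ≠ M π := by
    by_contra! h
    exact hlock ⟨hπ, h⟩
  rw [mindChange, dif_pos h]
  exact ⟨h.choose_spec.1, h.choose_spec.2.2⟩

lemma map_range_prefix (I : ℕ → α) {m n : ℕ} (h : m ≤ n) :
    (List.range m).map I <+: (List.range n).map I := by
  have : List.range m = (List.range n).take m := by rw [List.take_range, min_eq_left h]
  exact this ▸ (List.take_prefix _ _).map I

lemma mem_range_of_mem_map_range {I : ℕ → α} {n : ℕ} {x : α} (hx : x ∈ (List.range n).map I) :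
    x ∈ range I := by
  obtain ⟨m, -, rfl⟩ := List.mem_map.1 hx
  exact mem_range_self m

lemma map_range_length_eq {I : ℕ → α} (h : ∀ j (hj : j < π.length), I j = π[j]) :
    (List.range π.length).map I = π :=
  List.ext_getElem (by simp) fun j hj _ => by simpa using h j (by simpa using hj)

lemma eq_map_range_of_prefix {I : ℕ → α} {n : ℕ} (h : π <+: (List.range n).map I) :
    π = (List.range π.length).map I := by
  conv_lhs => rw [List.prefix_iff_eq_take.1 h]
  rw [← List.map_take, List.take_range, min_eq_left (by simpa using h.length_le)]

lemma exists_map_range_eq_of_prefix_chain {f : ℕ → List α} (hf : ∀ k, f k <+: f (k + 1))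
    (hlen : ∀ k, k ≤ (f k).length) :
    ∃ I : ℕ → α, ∀ k, (List.range (f k).length).map I = f k := by
  have hchain : ∀ j k, j ≤ k → f j <+: f k := fun j =>
    Nat.le_induction List.prefix_rfl fun k _ ih => ih.trans (hf k)
  refine ⟨fun j => (f (j + 1))[j]'(hlen (j + 1)), fun k => map_range_length_eq fun j hj => ?_⟩
  rcases le_total k (j + 1) with h | h
  · exact ((hchain k (j + 1) h).getElem hj).symm
  · exact (hchain (j + 1) k h).getElem _

theorem exists_isLockingSeq (hS : S.Countable) (hne : S.Nonempty)
    (hM : ∀ I : ℕ → α, range I = S → ∃ b, ∃ N, ∀ n ≥ N, M ((List.range n).map I) = b) :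
    ∃ π, IsLockingSeq M S π := by
  obtain ⟨g, rfl⟩ := hS.exists_eq_range hne
  by_contra! hno
  obtain ⟨f, hf_zero, hf_succ⟩ : ∃ f : ℕ → List α,
      f 0 = [] ∧ ∀ k, f (k + 1) = mindChange M (range g) (f k) ++ [g k] :=
    ⟨fun k => Nat.rec [] (fun k σ => mindChange M (range g) σ ++ [g k]) k, rfl, fun _ => rfl⟩
  have hf_mem : ∀ k, ∀ x ∈ f k, x ∈ range g := by
    rintro (_ | k) x hx
    · simp [hf_zero] at hx
    · rw [hf_succ, List.mem_append, List.mem_singleton] at hx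
      rcases hx with hx | rfl
      · exact mem_of_mem_mindChange hx
      · exact mem_range_self k
  have hf_mc := fun k => mindChange_spec (hf_mem k) (hno (f k))
  have hf_len : ∀ k, k ≤ (f k).length := by
    intro k
    induction k with
    | zero => simp
    | succ k ih =>
      have := (hf_mc k).1.length_le
      rw [hf_succ, List.length_append, List.length_singleton]
      omega
  obtain ⟨I, hI⟩ := exists_map_range_eq_of_prefix_chain
    (fun k => (hf_mc k).1.trans (hf_succ k ▸ List.prefix_append _ _)) hf_len
  have hrange : range I = range g := by
    refine Subset.antisymm ?_ ?_
    · rintro _ ⟨n, rfl⟩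
      refine hf_mem (n + 1) _ (hI (n + 1) ▸ List.mem_map_of_mem ?_)
      simpa using hf_len (n + 1)
    · rintro _ ⟨k, rfl⟩
      have hk : g k ∈ f (k + 1) := by simp [hf_succ]
      exact mem_range_of_mem_map_range ((hI (k + 1)).symm ▸ hk)
  obtain ⟨b, N, hN⟩ := hM I hrange
  have hmc : mindChange M (range g) (f N) <+: (List.range (f (N + 1)).length).map I := by
    rw [hI, hf_succ]
    exact List.prefix_append _ _
  apply (hf_mc N).2
  calc M (mindChange M (range g) (f N))
      = M ((List.range (mindChange M (range g) (f N)).length).map I) := by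
        rw [← eq_map_range_of_prefix hmc]
    _ = b := hN _ ((hf_len N).trans (hf_mc N).1.length_le)
    _ = M (f N) := by rw [← hN _ (hf_len N), hI N]

lemma IsLockingSeq.exists_range_eq (hπ : IsLockingSeq M S π) (hS : S.Countable)
    (hne : S.Nonempty) :
    ∃ I : ℕ → α, range I = S ∧ ∀ n ≥ π.length, M ((List.range n).map I) = M π := by
  obtain ⟨g, rfl⟩ := hS.exists_eq_range hne
  let I : ℕ → α := fun n => if h : n < π.length then π[n] else g (n - π.length)
  have hIπ : (List.range π.length).map I = π := map_range_length_eq fun j hj => by simp [I, hj]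
  have hrange : range I = range g := by
    refine Subset.antisymm ?_ ?_
    · rintro _ ⟨n, rfl⟩
      by_cases h : n < π.length
      · simpa [I, h] using hπ.1 _ (List.getElem_mem h)
      · simp [I, h]
    · rintro _ ⟨k, rfl⟩
      exact ⟨π.length + k, by simp [I]⟩
  refine ⟨I, hrange, fun n hn => hπ.2 _ (hIπ ▸ map_range_prefix I hn) fun x hx => ?_⟩
  exact hrange ▸ mem_range_of_mem_map_range hx

lemma Set.Finite.exists_subset_map_range {T : Set α} (hT : T.Finite) {I : ℕ → α}
    (hTI : T ⊆ range I) : ∃ N, T ⊆ {x | x ∈ (List.range N).map I} := by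
  have hTI' : ∀ x ∈ T, ∃ n, I n = x := hTI
  choose! idx hidx using hTI'
  obtain ⟨N, hN⟩ := (hT.image idx).bddAbove
  refine ⟨N + 1, fun x hx => ?_⟩
  rw [← hidx x hx]
  exact List.mem_map_of_mem (List.mem_range.2 (Nat.lt_succ_of_le (hN (mem_image_of_mem idx hx))))

variable [Encodable α]

open Classical in
noncomputable def leastLockingSeq (M : List α → β) (S : Set α) : List α :=
  if h : {π | IsLockingSeq M S π}.Nonempty then argminOn encode _ h else []

lemma isLockingSeq_leastLockingSeq (hπ : IsLockingSeq M S π) :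
    IsLockingSeq M S (leastLockingSeq M S) := by
  have h : {π | IsLockingSeq M S π}.Nonempty := ⟨π, hπ⟩
  rw [leastLockingSeq, dif_pos h]
  exact argminOn_mem _ _ h

lemma not_isLockingSeq_of_encode_lt {ρ : List α}
    (hρ : encode ρ < encode (leastLockingSeq M S)) : ¬IsLockingSeq M S ρ := fun hlock => by
  have h : {π | IsLockingSeq M S π}.Nonempty := ⟨ρ, hlock⟩
  rw [leastLockingSeq, dif_pos h] at hρ
  exact not_lt_argminOn encode {π | IsLockingSeq M S π} (show ρ ∈ _ from hlock) hρ

lemma mem_of_mem_leastLockingSeq {x : α} (hx : x ∈ leastLockingSeq M S) : x ∈ S := by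
  unfold leastLockingSeq at hx
  split_ifs at hx with h
  · exact (argminOn_mem _ _ h).1 x hx
  · simp at hx

/-- Finitely many entries of `S` whose presence pins down `leastLockingSeq M S`. -/
def lockCertificate (M : List α → β) (S : Set α) : Set α :=
  {x | x ∈ leastLockingSeq M S} ∪
    ⋃ ρ ∈ {ρ : List α | encode ρ < encode (leastLockingSeq M S)}, {x | x ∈ mindChange M S ρ}

lemma lockCertificate_finite (M : List α → β) (S : Set α) : (lockCertificate M S).Finite :=
  (List.finite_toSet _).union <|
    ((finite_Iio _).preimage encode_injective.injOn).biUnion fun _ _ => List.finite_toSet _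

lemma lockCertificate_subset : lockCertificate M S ⊆ S := by
  rintro x (hx | hx)
  · exact mem_of_mem_leastLockingSeq hx
  · obtain ⟨ρ, -, hx⟩ := mem_iUnion₂.1 hx
    exact mem_of_mem_mindChange hx

lemma leastLockingSeq_eq_of_subset (hπ : IsLockingSeq M S π) {T : Set α}
    (hT : lockCertificate M S ⊆ T) (hTS : T ⊆ S) : leastLockingSeq M T = leastLockingSeq M S := by
  have hlockS := isLockingSeq_leastLockingSeq hπ
  have hlockT : IsLockingSeq M T (leastLockingSeq M S) :=
    ⟨fun x hx => hT (Or.inl hx), fun τ hτ hτT => hlockS.2 τ hτ fun x hx => hTS (hτT x hx)⟩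
  set ρ := leastLockingSeq M T
  have hρ : IsLockingSeq M T ρ := isLockingSeq_leastLockingSeq hlockT
  refine encode_injective (le_antisymm (not_lt.1 fun hlt => ?_) ?_)
  · exact not_isLockingSeq_of_encode_lt hlt hlockT
  · by_contra! hlt
    have hρS : ∀ x ∈ ρ, x ∈ S := fun x hx => hTS (hρ.1 x hx)
    obtain ⟨hpre, hne⟩ := mindChange_spec hρS (not_isLockingSeq_of_encode_lt hlt)
    refine hne (hρ.2 _ hpre fun x hx => hT (Or.inr ?_))
    exact mem_iUnion₂.2 ⟨ρ, hlt, hx⟩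

noncomputable def lockingLearner (M : List α → β) (σ : List α) : β :=
  M (leastLockingSeq M {x | x ∈ σ})

theorem IsLockingSeq.lockingLearner_eventually_eq (hπ : IsLockingSeq M S π) {I : ℕ → α}
    (hI : range I = S) :
    ∃ N, ∀ τ, (List.range N).map I <+: τ → (∀ x ∈ τ, x ∈ S) →
      lockingLearner M τ = M (leastLockingSeq M S) := by
  obtain ⟨N, hN⟩ := (lockCertificate_finite M S).exists_subset_map_range
    (lockCertificate_subset.trans hI.superset)
  refine ⟨N, fun τ hτ hτS => ?_⟩
  exact congrArg M (leastLockingSeq_eq_of_subset hπ (fun x hx => hτ.subset (hN hx)) hτS)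

end Locking

section Informants

def correctEntries (B : EqStruct) : Set ((ℕ × ℕ) × Bool) :=
  {x | x.2 = true ↔ B.rel x.1.1 x.1.2}

variable {B : EqStruct} {I : ℕ → (ℕ × ℕ) × Bool}

lemma correctEntries_nonempty (B : EqStruct) : (correctEntries B).Nonempty :=
  ⟨((0, 0), true), by simpa [correctEntries] using B.equiv.refl 0⟩

lemma isInformant_iff_range_eq : IsInformant B I ↔ range I = correctEntries B := by
  refine ⟨fun hI => Subset.antisymm ?_ fun x hx => ?_, fun hI => ⟨fun p => ?_, fun n => ?_⟩⟩
  · rintro _ ⟨n, rfl⟩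
    exact hI.2 n
  · obtain ⟨n, hn⟩ := hI.1 x.1
    refine ⟨n, Prod.ext hn (Bool.eq_iff_iff.2 ?_)⟩
    rw [hI.2 n, hn]
    exact hx.symm
  · classical
    obtain ⟨n, hn⟩ := hI.symm.subset (show (p, decide (B.rel p.1 p.2)) ∈ correctEntries B by
      simp [correctEntries])
    exact ⟨n, by rw [hn]⟩
  · exact hI.subset (mem_range_self n)

lemma IsInformant.describesPart_seg (hI : IsInformant B I) (n : ℕ) : DescribesPart B (seg I n) :=
  ⟨I, hI, by simp [seg]⟩

lemma DescribesPart.forall_mem_correctEntries {τ : List ((ℕ × ℕ) × Bool)} (hτ : DescribesPart B τ) :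
    ∀ x ∈ τ, x ∈ correctEntries B := by
  obtain ⟨I, hI, hτI⟩ := hτ
  intro x hx
  rw [hτI] at hx
  exact isInformant_iff_range_eq.1 hI ▸ mem_range_of_mem_map_range hx

theorem InfExLearns.lockingLearner_eventually_eq {Me : ℕ → EqStruct}
    {sim : EqStruct → EqStruct → Prop} {M : Learner} {A : EqStruct}
    (hA : InfExLearns Me sim M A) (hB : B.Isom A) (hI : IsInformant B I) :
    ∃ e, sim (Me e) B ∧ ∃ N, ∀ τ, seg I N <+: τ → DescribesPart B τ →
      lockingLearner M τ = some e := by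
  have hM : ∀ J, range J = correctEntries B →
      ∃ e, sim (Me e) B ∧ ∃ N, ∀ n ≥ N, M (seg J n) = some e :=
    fun J hJ => hA B hB J (isInformant_iff_range_eq.2 hJ)
  obtain ⟨π, hπ⟩ := exists_isLockingSeq (to_countable _) (correctEntries_nonempty B)
    fun J hJ => (hM J hJ).elim fun e he => ⟨some e, he.2⟩
  obtain ⟨J, hJ, hJπ⟩ := (isLockingSeq_leastLockingSeq hπ).exists_range_eq (to_countable _)
    (correctEntries_nonempty B)
  obtain ⟨e, hsim, N', hN'⟩ := hM J hJ
  obtain ⟨N, hN⟩ := hπ.lockingLearner_eventually_eq (isInformant_iff_range_eq.1 hI)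
  refine ⟨e, hsim, N, fun τ hτ hτB => ?_⟩
  rw [hN τ hτ hτB.forall_mem_correctEntries, ← hJπ _ (le_max_right N' _)]
  exact hN' _ (le_max_left _ _)

end Informants

/-- locking normal form: any InfEx-learner `M` can be replaced by an
informant-locking learner `M'` learning every structure that `M` learns. -/
theorem stmt8 (Me : ℕ → EqStruct) (sim : EqStruct → EqStruct → Prop) (M : Learner) :
    ∃ M' : Learner, ∀ A : EqStruct, InfExLearns Me sim M A →
      (InfExLearns Me sim M' A ∧
        ∀ I, IsInformant A I →
          ∃ n, ∀ τ, seg I n <+: τ → DescribesPart A τ → M' τ = M' (seg I n)) := by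
  refine ⟨lockingLearner M, fun A hA => ⟨fun B hB I hI => ?_, fun I hI => ?_⟩⟩
  · obtain ⟨e, hsim, N, hN⟩ := hA.lockingLearner_eventually_eq hB hI
    exact ⟨e, hsim, N, fun n hn => hN _ (map_range_prefix I hn) (hI.describesPart_seg n)⟩
  · obtain ⟨e, -, N, hN⟩ :=
      hA.lockingLearner_eventually_eq ⟨id, bijective_id, fun _ _ => Iff.rfl⟩ hI
    exact ⟨N, fun τ hτ hτA =>
      (hN τ hτ hτA).trans (hN _ List.prefix_rfl (hI.describesPart_seg N)).symm⟩
end
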